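/- arXiv:1511.01193 — 3 statements merged into one kernel-verified Lean document; each statement's English description precedes it below -/
import Mathlib

section
/- Let A be an N×N matrix with integer entries and let Ā = (A°)_- be the (N+3)×(N+3) matrix obtained by first applying the Parry–Sullivan expansion and then the Cuntz splice. Then det(1 - Ā) = -det(1 - A). -/
/-- Parry–Sullivan expansion at vertex `N = n+1` of an `N × N` matrix `A`:
first `N-1` rows are those of `A` with a `0` appended in column `N+1`,
row `N` is the standard basis vector `e_{N+1}`, and
row `N+1` is row `N` of `A` with a `0` appended. -/
def psExpansion {n : ℕ} (A : Matrix (Fin (n+1)) (Fin (n+1)) ℤ) :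
    Matrix (Fin (n+2)) (Fin (n+2)) ℤ :=
  Matrix.of fun i j =>
    if hi : (i : ℕ) < n then
      if hj : (j : ℕ) < n + 1 then A ⟨i, Nat.lt_succ_of_lt hi⟩ ⟨j, hj⟩ else 0
    else if (i : ℕ) = n then
      if (j : ℕ) = n + 1 then 1 else 0
    else
      if hj : (j : ℕ) < n + 1 then A ⟨n, Nat.lt_succ_self n⟩ ⟨j, hj⟩ else 0

/-- Cuntz splice of an `M × M` matrix `B` (`M = m+1`): the `(M+2) × (M+2)` matrix whose
upper-left `M × M` block is `B`, with (1-based) entries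
`B₋(M,M+1) = B₋(M+1,M) = B₋(M+1,M+1) = B₋(M+1,M+2) = B₋(M+2,M+1) = B₋(M+2,M+2) = 1`
and all other new entries `0`. -/
def cuntzSplice {m : ℕ} (B : Matrix (Fin (m+1)) (Fin (m+1)) ℤ) :
    Matrix (Fin (m+3)) (Fin (m+3)) ℤ :=
  Matrix.of fun i j =>
    if hi : (i : ℕ) < m + 1 then
      if hj : (j : ℕ) < m + 1 then B ⟨i, hi⟩ ⟨j, hj⟩
      else if (i : ℕ) = m ∧ (j : ℕ) = m + 1 then 1 else 0
    else
      if (i : ℕ) = m + 1 then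
        if (j : ℕ) = m ∨ (j : ℕ) = m + 1 ∨ (j : ℕ) = m + 2 then 1 else 0
      else
        if (j : ℕ) = m + 1 ∨ (j : ℕ) = m + 2 then 1 else 0

/-!
In `1 - A°` row `N` is `e_N - e_{N+1}` and row `N+1` is `(-A_N, 1)`. Adding the latter to the
former leaves the determinant unchanged and produces a matrix whose last column is `e_{N+1}` and
whose upper-left block is `1 - A`, so `det (1 - A°) = det (1 - A)`.

For an `M × M` matrix `B`, the last row of `1 - B₋` is `-e_{M+1}`; expanding along it, and then
along the last column of the resulting minor, which is `-e_{M+1}` again, gives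
`det (1 - B₋) = -det (1 - B)`.
-/

open Matrix Fin

namespace Matrix

variable {R : Type*} [CommRing R] {n : ℕ}

theorem det_succ_row_of_eq_zero (M : Matrix (Fin (n+1)) (Fin (n+1)) R) (i j : Fin (n+1))
    (h : ∀ k, k ≠ j → M i k = 0) :
    M.det = (-1) ^ (i + j : ℕ) * M i j * (M.submatrix i.succAbove j.succAbove).det := by
  rw [det_succ_row M i, Finset.sum_eq_single j (fun k _ hk => by simp [h k hk]) (by simp)]

theorem det_succ_column_of_eq_zero (M : Matrix (Fin (n+1)) (Fin (n+1)) R) (i j : Fin (n+1))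
    (h : ∀ k, k ≠ i → M k j = 0) :
    M.det = (-1) ^ (i + j : ℕ) * M i j * (M.submatrix i.succAbove j.succAbove).det := by
  rw [det_succ_column M j, Finset.sum_eq_single i (fun k _ hk => by simp [h k hk]) (by simp)]

theorem det_eq_mul_det_submatrix_castSucc (M : Matrix (Fin (n+1)) (Fin (n+1)) R)
    (h : ∀ i : Fin n, M i.castSucc (last n) = 0) :
    M.det = M (last n) (last n) * (M.submatrix castSucc castSucc).det := by
  rw [det_succ_column_of_eq_zero M (last n) (last n)
    (fun k hk => by obtain ⟨i, rfl⟩ := exists_castSucc_eq.2 hk; exact h i)]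
  simp [← two_mul]

end Matrix

section psExpansion

variable {n : ℕ} (A : Matrix (Fin (n+1)) (Fin (n+1)) ℤ)

@[simp] theorem psExpansion_castSucc_castSucc_castSucc (i : Fin n) (j : Fin (n+1)) :
    psExpansion A i.castSucc.castSucc j.castSucc = A i.castSucc j := by
  simp [psExpansion, j.is_le]; rfl

@[simp] theorem psExpansion_castSucc_castSucc_last (i : Fin n) :
    psExpansion A i.castSucc.castSucc (last (n+1)) = 0 := by
  simp [psExpansion]

@[simp] theorem psExpansion_castSucc_last_castSucc (j : Fin (n+1)) :
    psExpansion A (last n).castSucc j.castSucc = 0 := by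
  simp [psExpansion, j.is_lt.ne]

@[simp] theorem psExpansion_castSucc_last_last :
    psExpansion A (last n).castSucc (last (n+1)) = 1 := by
  simp [psExpansion]

@[simp] theorem psExpansion_last_castSucc (j : Fin (n+1)) :
    psExpansion A (last (n+1)) j.castSucc = A (last n) j := by
  simp [psExpansion, j.is_le]; rfl

@[simp] theorem psExpansion_last_last : psExpansion A (last (n+1)) (last (n+1)) = 0 := by
  simp [psExpansion]

end psExpansion

section cuntzSplice

variable {m : ℕ} (B : Matrix (Fin (m+1)) (Fin (m+1)) ℤ)

@[simp] theorem cuntzSplice_castSucc_castSucc_castSucc_castSucc (i j : Fin (m+1)) :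
    cuntzSplice B i.castSucc.castSucc j.castSucc.castSucc = B i j := by
  simp [cuntzSplice, i.is_le, j.is_le]

@[simp] theorem cuntzSplice_castSucc_castSucc_last (i : Fin (m+1)) :
    cuntzSplice B i.castSucc.castSucc (last (m+2)) = 0 := by
  simp [cuntzSplice, i.is_le]

@[simp] theorem cuntzSplice_castSucc_last_last :
    cuntzSplice B (last (m+1)).castSucc (last (m+2)) = 1 := by
  simp [cuntzSplice]

@[simp] theorem cuntzSplice_last_castSucc_castSucc (j : Fin (m+1)) :
    cuntzSplice B (last (m+2)) j.castSucc.castSucc = 0 := by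
  simp [cuntzSplice]; omega

@[simp] theorem cuntzSplice_last_castSucc_last :
    cuntzSplice B (last (m+2)) (last (m+1)).castSucc = 1 := by
  simp [cuntzSplice]

@[simp] theorem cuntzSplice_last_last : cuntzSplice B (last (m+2)) (last (m+2)) = 1 := by
  simp [cuntzSplice]

end cuntzSplice

theorem det_one_sub_psExpansion {n : ℕ} (A : Matrix (Fin (n+1)) (Fin (n+1)) ℤ) :
    (1 - psExpansion A).det = (1 - A).det := by
  set N := 1 - psExpansion A
  set N' := N.updateRow (last n).castSucc (N (last n).castSucc + N (last (n+1)))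
  have hcol : ∀ i : Fin (n+1), N' i.castSucc (last (n+1)) = 0 := by
    intro i
    rcases eq_castSucc_or_eq_last i with ⟨i, rfl⟩ | rfl <;> simp [N', N, updateRow_apply, one_apply]
  have hpivot : N' (last (n+1)) (last (n+1)) = 1 := by
    simp [N', N, updateRow_apply, (castSucc_ne_last _).symm]
  have hminor : N'.submatrix castSucc castSucc = 1 - A := by
    ext i j
    rcases eq_castSucc_or_eq_last i with ⟨i, rfl⟩ | rfl
    · simp [N', N, updateRow_apply, one_apply]
    · simp [N', N, updateRow_apply, one_apply, (castSucc_ne_last _).symm, sub_eq_add_neg]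
  rw [← det_updateRow_add_self N (castSucc_ne_last (last n)),
    det_eq_mul_det_submatrix_castSucc N' hcol, hpivot, hminor, one_mul]

theorem det_one_sub_cuntzSplice {m : ℕ} (B : Matrix (Fin (m+1)) (Fin (m+1)) ℤ) :
    (1 - cuntzSplice B).det = -(1 - B).det := by
  set N := 1 - cuntzSplice B
  have hrow : ∀ k, k ≠ (last (m+1)).castSucc → N (last (m+2)) k = 0 := by
    intro k hk
    rcases eq_castSucc_or_eq_last k with ⟨k, rfl⟩ | rfl
    · rcases eq_castSucc_or_eq_last k with ⟨k, rfl⟩ | rfl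
      · simp [N, one_apply, (castSucc_ne_last _).symm]
      · exact absurd rfl hk
    · simp [N]
  set M := N.submatrix castSucc (last (m+1)).castSucc.succAbove
  have hcol : ∀ i : Fin (m+1), M i.castSucc (last (m+1)) = 0 := by
    intro i
    simp [M, N, one_apply]
  have hminor : M.submatrix castSucc castSucc = 1 - B := by
    ext i j
    simp [M, N, one_apply, succAbove_castSucc_of_lt _ _ (castSucc_lt_last _)]
  have hsign : (-1 : ℤ) ^ (m + 2 + (m + 1)) = -1 := Odd.neg_one_pow ⟨m + 1, by ring⟩
  rw [det_succ_row_of_eq_zero N _ _ hrow, succAbove_last, det_eq_mul_det_submatrix_castSucc M hcol,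
    hminor]
  simp [M, N, hsign, one_apply, (castSucc_ne_last _).symm]

/-- For `Ā = (A°)₋`, Parry–Sullivan expansion followed by Cuntz splice,
`det(1 - Ā) = -det(1 - A)`. -/
theorem det_one_sub_bar {n : ℕ} (A : Matrix (Fin (n+1)) (Fin (n+1)) ℤ) :
    ((1 : Matrix (Fin (n+4)) (Fin (n+4)) ℤ) - cuntzSplice (psExpansion A)).det
      = -((1 : Matrix (Fin (n+1)) (Fin (n+1)) ℤ) - A).det := by
  rw [det_one_sub_cuntzSplice, det_one_sub_psExpansion]
end

section
/- Let A be an N×N integer matrix and A_- its Cuntz splice. The map ξ_A : Z^N → Z^{N+2}, x ↦ (x,0,0), induces a group isomorphism from G(A) = Z^N/(1-A^t)Z^N onto G(A_-) = Z^{N+2}/(1-A_-^t)Z^{N+2}, sending the class of (1,...,1,0) in G(A) to the class of (1,...,1,1,1) in G(A_-). -/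
/-- The subgroup `(1 - Bᵗ)ℤ^k` of `ℤ^k`, i.e. the image of `x ↦ (1 - Bᵗ)x`. -/
def bfSubgroup {k : ℕ} (B : Matrix (Fin k) (Fin k) ℤ) : Submodule ℤ (Fin k → ℤ) :=
  LinearMap.range (Matrix.mulVecLin (1 - B.transpose))

/-- The map `ξ : ℤ^N → ℤ^{N+2}`, `(x_1,…,x_N) ↦ (x_1,…,x_N,0,0)` (`N = n+1`). -/
def xiMap {n : ℕ} (x : Fin (n+1) → ℤ) : Fin (n+3) → ℤ :=
  fun j => if hj : (j : ℕ) < n + 1 then x ⟨j, hj⟩ else 0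

/-! The inclusion `ξ` has the retraction `ψ y = (y₁, …, y_N) - y_{N+2} e_N`, and both maps respect
the Bowen–Franks subgroups: `(1 - A₋ᵗ)(ξ x - x_N e_{N+2}) = ξ((1 - Aᵗ) x)` and
`ψ((1 - A₋ᵗ) y) = (1 - Aᵗ)(y₁, …, y_N)`. Moreover
`ξ ψ y - y = (1 - A₋ᵗ)(y_{N+2} e_{N+1} + y_{N+1} e_{N+2})`, so `ξ ∘ ψ` is the identity modulo
`(1 - A₋ᵗ)ℤ^{N+2}` and the induced maps on the quotients are mutually inverse. Since
`ψ (1, …, 1) = (1, …, 1, 0)`, the class of `(1, …, 1, 0)` is sent to that of `(1, …, 1)`.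
-/

open Matrix

namespace Submodule

variable {R M M' : Type*} [Ring R] [AddCommGroup M] [Module R M] [AddCommGroup M'] [Module R M']
  {p : Submodule R M} {p' : Submodule R M'}

def quotEquivOfInverseModulo (f : M →ₗ[R] M') (g : M' →ₗ[R] M) (hf : p ≤ p'.comap f)
    (hg : p' ≤ p.comap g) (hgf : ∀ x, g (f x) - x ∈ p) (hfg : ∀ y, f (g y) - y ∈ p') :
    (M ⧸ p) ≃ₗ[R] M' ⧸ p' :=
  LinearEquiv.ofLinearMap (p.mapQ p' f hf) (p'.mapQ p g hg)
    (by ext y; exact (Quotient.eq p').2 (hfg y))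
    (by ext x; exact (Quotient.eq p).2 (hgf x))

@[simp]
theorem quotEquivOfInverseModulo_mk (f : M →ₗ[R] M') (g : M' →ₗ[R] M) (hf hg hgf hfg) (x : M) :
    quotEquivOfInverseModulo (p := p) (p' := p') f g hf hg hgf hfg (Quotient.mk x) =
      Quotient.mk (f x) :=
  rfl

theorem quotEquivOfInverseModulo_mk_inverse (f : M →ₗ[R] M') (g : M' →ₗ[R] M)
    (hf hg hgf) (hfg : ∀ y, f (g y) - y ∈ p') (y : M') :
    quotEquivOfInverseModulo (p := p) (p' := p') f g hf hg hgf hfg (Quotient.mk (g y)) =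
      Quotient.mk y :=
  (Quotient.eq p').2 (hfg y)

end Submodule

theorem Matrix.one_sub_transpose_mulVec {ι R : Type*} [Fintype ι] [DecidableEq ι] [CommRing R]
    (B : Matrix ι ι R) (y : ι → R) : (1 - Bᵀ) *ᵥ y = y - y ᵥ* B := by
  rw [sub_mulVec, one_mulVec, mulVec_transpose]

theorem Fin.val_eq_iff_eq_last {n : ℕ} {x : Fin (n+1)} : (x : ℕ) = n ↔ x = Fin.last n := by
  simp [Fin.ext_iff]

theorem Fin.sum_univ_castSucc_castSucc {M : Type*} [AddCommMonoid M] {n : ℕ}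
    (f : Fin (n+2) → M) :
    ∑ j, f j =
      ∑ j : Fin n, f j.castSucc.castSucc + f (Fin.last n).castSucc + f (Fin.last (n+1)) := by
  rw [Fin.sum_univ_castSucc, Fin.sum_univ_castSucc]

theorem Fin.funext_castSucc_castSucc {α : Type*} {n : ℕ} {f g : Fin (n+2) → α}
    (h : ∀ i : Fin n, f i.castSucc.castSucc = g i.castSucc.castSucc)
    (hp : f (Fin.last n).castSucc = g (Fin.last n).castSucc)
    (hq : f (Fin.last (n+1)) = g (Fin.last (n+1))) :
    f = g := by
  funext i
  induction i using Fin.lastCases with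
  | last => exact hq
  | cast i =>
    induction i using Fin.lastCases with
    | last => exact hp
    | cast i => exact h i

theorem mulVec_mem_bfSubgroup {k : ℕ} (B : Matrix (Fin k) (Fin k) ℤ) (w : Fin k → ℤ) :
    (1 - Bᵀ) *ᵥ w ∈ bfSubgroup B :=
  ⟨w, rfl⟩

section CuntzSplice

-- The old indices of `Fin (n+3)` are `i.castSucc.castSucc`, the two new ones
-- `(Fin.last (n+1)).castSucc` and `Fin.last (n+2)`.

variable {n : ℕ} (A : Matrix (Fin (n+1)) (Fin (n+1)) ℤ) (y : Fin (n+3) → ℤ)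

theorem vecMul_cuntzSplice_castSucc_castSucc (i : Fin (n+1)) :
    (y ᵥ* cuntzSplice A) i.castSucc.castSucc =
      ((fun j => y j.castSucc.castSucc) ᵥ* A) i +
        if i = Fin.last n then y (Fin.last (n+1)).castSucc else 0 := by
  have hi : (i : ℕ) ≠ n + 1 := by omega
  simp [vecMul, dotProduct, Fin.sum_univ_castSucc_castSucc, cuntzSplice, Fin.is_le,
    Fin.val_eq_iff_eq_last, hi]

theorem vecMul_cuntzSplice_last_castSucc : (y ᵥ* cuntzSplice A) (Fin.last (n+1)).castSucc =
    y (Fin.last n).castSucc.castSucc + y (Fin.last (n+1)).castSucc + y (Fin.last (n+2)) := by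
  simp [vecMul, dotProduct, Fin.sum_univ_castSucc_castSucc, cuntzSplice, Fin.is_le,
    Fin.val_eq_iff_eq_last]

theorem vecMul_cuntzSplice_last :
    (y ᵥ* cuntzSplice A) (Fin.last (n+2)) = y (Fin.last (n+1)).castSucc + y (Fin.last (n+2)) := by
  simp [vecMul, dotProduct, Fin.sum_univ_castSucc_castSucc, cuntzSplice, Fin.is_le]

end CuntzSplice

section XiMap

variable {n : ℕ} (x : Fin (n+1) → ℤ)

@[simp] theorem xiMap_castSucc_castSucc (i : Fin (n+1)) : xiMap x i.castSucc.castSucc = x i :=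
  dif_pos i.is_lt

@[simp] theorem xiMap_last_castSucc : xiMap x (Fin.last (n+1)).castSucc = 0 := by
  simp [xiMap]

@[simp] theorem xiMap_last : xiMap x (Fin.last (n+2)) = 0 := by
  simp [xiMap]

end XiMap

section Maps

variable {n : ℕ}

def xiLinearMap (n : ℕ) : (Fin (n+1) → ℤ) →ₗ[ℤ] (Fin (n+3) → ℤ) where
  toFun := xiMap
  map_add' x x' := Fin.funext_castSucc_castSucc (by simp) (by simp) (by simp)
  map_smul' c x := Fin.funext_castSucc_castSucc (by simp) (by simp) (by simp)

def spliceRetraction (n : ℕ) : (Fin (n+3) → ℤ) →ₗ[ℤ] (Fin (n+1) → ℤ) :=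
  LinearMap.funLeft ℤ ℤ (Fin.castSucc ∘ Fin.castSucc) -
    LinearMap.single ℤ (fun _ => ℤ) (Fin.last n) ∘ₗ LinearMap.proj (Fin.last (n+2))

@[simp] theorem coe_xiLinearMap : ⇑(xiLinearMap n) = xiMap := rfl

theorem spliceRetraction_apply (y : Fin (n+3) → ℤ) :
    spliceRetraction n y =
      (fun i => y i.castSucc.castSucc) - Pi.single (Fin.last n) (y (Fin.last (n+2))) :=
  rfl

theorem spliceRetraction_xiMap (x : Fin (n+1) → ℤ) : spliceRetraction n (xiMap x) = x := by
  simp [spliceRetraction_apply]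

variable (A : Matrix (Fin (n+1)) (Fin (n+1)) ℤ)

theorem one_sub_cuntzSplice_transpose_mulVec_xiMap_sub_single (x : Fin (n+1) → ℤ) :
    (1 - (cuntzSplice A)ᵀ) *ᵥ (xiMap x - Pi.single (Fin.last (n+2)) (x (Fin.last n))) =
      xiMap ((1 - Aᵀ) *ᵥ x) := by
  rw [one_sub_transpose_mulVec, one_sub_transpose_mulVec]
  refine Fin.funext_castSucc_castSucc (fun i => ?_) ?_ ?_ <;>
    simp [vecMul_cuntzSplice_castSucc_castSucc, vecMul_cuntzSplice_last_castSucc,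
      vecMul_cuntzSplice_last]

theorem spliceRetraction_one_sub_cuntzSplice_transpose_mulVec (y : Fin (n+3) → ℤ) :
    spliceRetraction n ((1 - (cuntzSplice A)ᵀ) *ᵥ y) =
      (1 - Aᵀ) *ᵥ (fun i => y i.castSucc.castSucc) := by
  rw [one_sub_transpose_mulVec, one_sub_transpose_mulVec]
  ext i
  simp only [spliceRetraction_apply, Pi.sub_apply, vecMul_cuntzSplice_castSucc_castSucc,
    vecMul_cuntzSplice_last, sub_add_cancel_right, Pi.single_apply]
  split_ifs <;> ring

theorem xiMap_spliceRetraction_sub (y : Fin (n+3) → ℤ) :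
    xiMap (spliceRetraction n y) - y = (1 - (cuntzSplice A)ᵀ) *ᵥ
      (Pi.single (Fin.last (n+1)).castSucc (y (Fin.last (n+2))) +
        Pi.single (Fin.last (n+2)) (y (Fin.last (n+1)).castSucc)) := by
  rw [one_sub_transpose_mulVec]
  refine Fin.funext_castSucc_castSucc (fun i => ?_) ?_ ?_ <;>
    simp [spliceRetraction_apply, vecMul_cuntzSplice_castSucc_castSucc,
      vecMul_cuntzSplice_last_castSucc, vecMul_cuntzSplice_last, Pi.single_apply, ← Pi.zero_def]

theorem spliceRetraction_const_one :
    spliceRetraction n (fun _ => 1) = fun i : Fin (n+1) => if (i : ℕ) = n then 0 else 1 := by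
  ext i
  simp only [spliceRetraction_apply, Pi.sub_apply, Pi.single_apply, Fin.val_eq_iff_eq_last]
  split_ifs <;> rfl

def cuntzSpliceQuotEquiv : ((Fin (n+1) → ℤ) ⧸ bfSubgroup A) ≃ₗ[ℤ]
    ((Fin (n+3) → ℤ) ⧸ bfSubgroup (cuntzSplice A)) :=
  Submodule.quotEquivOfInverseModulo (xiLinearMap n) (spliceRetraction n)
    (by
      rintro _ ⟨x, rfl⟩
      rw [Submodule.mem_comap, mulVecLin_apply, coe_xiLinearMap,
        ← one_sub_cuntzSplice_transpose_mulVec_xiMap_sub_single]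
      exact mulVec_mem_bfSubgroup _ _)
    (by
      rintro _ ⟨y, rfl⟩
      rw [Submodule.mem_comap, mulVecLin_apply,
        spliceRetraction_one_sub_cuntzSplice_transpose_mulVec]
      exact mulVec_mem_bfSubgroup _ _)
    (fun x => by simp [spliceRetraction_xiMap])
    (fun y => by
      rw [coe_xiLinearMap, xiMap_spliceRetraction_sub]
      exact mulVec_mem_bfSubgroup _ _)

theorem cuntzSpliceQuotEquiv_mk (x : Fin (n+1) → ℤ) :
    cuntzSpliceQuotEquiv A (Submodule.Quotient.mk x) = Submodule.Quotient.mk (xiMap x) :=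
  Submodule.quotEquivOfInverseModulo_mk _ _ _ _ _ _ x

theorem cuntzSpliceQuotEquiv_mk_spliceRetraction (y : Fin (n+3) → ℤ) :
    cuntzSpliceQuotEquiv A (Submodule.Quotient.mk (spliceRetraction n y)) =
      Submodule.Quotient.mk y :=
  Submodule.quotEquivOfInverseModulo_mk_inverse _ _ _ _ _ _ y

end Maps

/-- The map `ξ_A : x ↦ (x,0,0)` induces a group isomorphism `G(A) ≅ G(A₋)` sending
the class of `(1,…,1,0)` (first `N-1` entries `1`, last entry `0`) to the class of
the all-ones vector `(1,…,1,1,1)`. -/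
theorem xiMap_induces_isomorphism {n : ℕ} (A : Matrix (Fin (n+1)) (Fin (n+1)) ℤ) :
    ∃ e : ((Fin (n+1) → ℤ) ⧸ bfSubgroup A) ≃+
        ((Fin (n+3) → ℤ) ⧸ bfSubgroup (cuntzSplice A)),
      (∀ x : Fin (n+1) → ℤ,
        e (Submodule.Quotient.mk x) = Submodule.Quotient.mk (xiMap x)) ∧
      e (Submodule.Quotient.mk (fun i : Fin (n+1) => if (i : ℕ) = n then 0 else 1))
        = Submodule.Quotient.mk (fun _ : Fin (n+3) => (1 : ℤ)) := by
  refine ⟨(cuntzSpliceQuotEquiv A).toAddEquiv, cuntzSpliceQuotEquiv_mk A, ?_⟩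
  rw [← spliceRetraction_const_one]
  exact cuntzSpliceQuotEquiv_mk_spliceRetraction A _
end

section
/- Let A be an N×N integer matrix, and let Ā and Ã be the two (N+3)×(N+3) matrices defined from A as in the paper (differing only in the (N+2,N+2)-entry). Then the cokernels Z^{N+3}/(1-Ā^t)Z^{N+3} and Z^{N+3}/(1-Ã^t)Z^{N+3} are isomorphic as abelian groups. -/
/-- The matrix `Ã`: identical to `Ā = (A°)₋` except that its `(N+2,N+2)`-entry
(1-based; 0-based index `(n+2,n+2)`) is `0` instead of `1`. -/
def tildeMatrix {n : ℕ} (A : Matrix (Fin (n+1)) (Fin (n+1)) ℤ) :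
    Matrix (Fin (n+4)) (Fin (n+4)) ℤ :=
  Matrix.of fun i j =>
    if (i : ℕ) = n + 2 ∧ (j : ℕ) = n + 2 then 0 else cuntzSplice (psExpansion A) i j

/-!
The last row of `Ā` is `e_{N+2} + e_{N+3}`, so column `N+3` of `1 - Āᵗ` is `-e_{N+2}`.
Subtracting that column from column `N+2` (right multiplication by an elementary transvection,
which is invertible) turns `1 - Āᵗ` into `1 - Ãᵗ`. Hence both matrices have the same column
space, and the two cokernels are the same quotient.
-/

open Matrix

theorem range_mulVecLin_mul_of_isUnit {R m n : Type*} [CommRing R] [Fintype m] [Fintype n]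
    [DecidableEq n] (M : Matrix m n R) {U : Matrix n n R} (hU : IsUnit U) :
    LinearMap.range (M * U).mulVecLin = LinearMap.range M.mulVecLin := by
  rw [mulVecLin_mul]
  exact LinearMap.range_comp_of_range_eq_top _
    (LinearMap.range_eq_top.2 (mulVec_surjective_iff_isUnit.2 hU))

theorem one_sub_transpose_sub_single_eq_mul_transvection {R n : Type*} [CommRing R] [Fintype n]
    [DecidableEq n] {B : Matrix n n R} {p q : n} (hB : B q = Pi.single p 1 + Pi.single q 1) :
    1 - (B - single p p 1)ᵀ = (1 - Bᵀ) * transvection q p (-1) := by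
  have hcol : (1 - Bᵀ) * single q p (-1) = single p p 1 := by
    ext i j
    by_cases hj : j = p
    · subst hj
      rw [mul_single_apply_same, Matrix.sub_apply, transpose_apply, hB]
      simp [one_apply, single_apply, Pi.single_apply, eq_comm]
    · simp [hj, Ne.symm hj]
  rw [transvection, mul_add, mul_one, hcol, transpose_sub, transpose_single]
  abel

theorem bfSubgroup_sub_single_of_row_eq {k : ℕ} {B : Matrix (Fin k) (Fin k) ℤ} {p q : Fin k}
    (hpq : p ≠ q) (hB : B q = Pi.single p 1 + Pi.single q 1) :
    bfSubgroup (B - single p p 1) = bfSubgroup B := by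
  rw [bfSubgroup, bfSubgroup, one_sub_transpose_sub_single_eq_mul_transvection hB]
  refine range_mulVecLin_mul_of_isUnit _ ?_
  rw [isUnit_iff_isUnit_det, det_transvection_of_ne q p hpq.symm]
  exact isUnit_one

theorem cuntzSplice_last_row {m : ℕ} (B : Matrix (Fin (m+1)) (Fin (m+1)) ℤ) :
    cuntzSplice B (Fin.last (m+2)) =
      Pi.single ⟨m+1, by omega⟩ 1 + Pi.single (Fin.last (m+2)) 1 := by
  ext j
  simp only [cuntzSplice, of_apply, Fin.val_last, Pi.add_apply, Pi.single_apply, Fin.ext_iff]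
  split_ifs <;> omega

theorem tildeMatrix_eq_sub_single {n : ℕ} (A : Matrix (Fin (n+1)) (Fin (n+1)) ℤ) :
    tildeMatrix A =
      cuntzSplice (psExpansion A) - single ⟨n+2, by omega⟩ ⟨n+2, by omega⟩ 1 := by
  ext i j
  simp only [tildeMatrix, cuntzSplice, of_apply, Matrix.sub_apply, single_apply, Fin.ext_iff]
  split_ifs <;> omega

theorem bfSubgroup_tildeMatrix {n : ℕ} (A : Matrix (Fin (n+1)) (Fin (n+1)) ℤ) :
    bfSubgroup (tildeMatrix A) = bfSubgroup (cuntzSplice (psExpansion A)) := by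
  rw [tildeMatrix_eq_sub_single]
  exact bfSubgroup_sub_single_of_row_eq (Fin.ne_of_val_ne (by simp))
    (cuntzSplice_last_row _)

/-- The cokernels `ℤ^{N+3}/(1-Āᵗ)ℤ^{N+3}` and `ℤ^{N+3}/(1-Ãᵗ)ℤ^{N+3}` are
isomorphic as abelian groups. -/
theorem coker_bar_iso_coker_tilde {n : ℕ} (A : Matrix (Fin (n+1)) (Fin (n+1)) ℤ) :
    Nonempty (((Fin (n+4) → ℤ) ⧸ bfSubgroup (cuntzSplice (psExpansion A))) ≃+
      ((Fin (n+4) → ℤ) ⧸ bfSubgroup (tildeMatrix A))) := by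
  exact ⟨(Submodule.quotEquivOfEq _ _ (bfSubgroup_tildeMatrix A).symm).toAddEquiv⟩
end
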